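/- Let f : [a,b] → ℝ be L-Lipschitz on [a,b], i.e., |f(s) − f(t)| ≤ L·|s−t| for all s, t ∈ [a,b], where L > 0. Then for every x ∈ [a,b], |∫_a^b f(t) dt − [(x−a)·f(a) + (b−x)·f(b)]| ≤ [ (1/4)(b−a)² + (x − (a+b)/2)² ] · L. -/
import Mathlib

open MeasureTheory Set intervalIntegral

/-- **Generalised trapezoid inequality for Lipschitz functions.** -/
theorem generalised_trapezoid_lipschitz
    (a b : ℝ) (hab : a < b) (L : ℝ) (hL : 0 < L) (f : ℝ → ℝ)
    (hf : ∀ s ∈ Set.Icc a b, ∀ t ∈ Set.Icc a b, |f s - f t| ≤ L * |s - t|)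
    (x : ℝ) (hx : x ∈ Set.Icc a b) :
    |(∫ t in a..b, f t) - ((x - a) * f a + (b - x) * f b)| ≤
      ((1 / 4) * (b - a) ^ 2 + (x - (a + b) / 2) ^ 2) * L := by
  obtain ⟨hax, hxb⟩ := hx
  have hK : LipschitzOnWith L.toNNReal f (Icc a b) := by
    apply LipschitzOnWith.of_dist_le_mul
    intro s hs t ht
    simpa [Real.dist_eq, Real.coe_toNNReal L hL.le] using hf s hs t ht
  have hcont := hK.continuousOn
  have hint1 : IntervalIntegrable f volume a x :=
    (hcont.mono (by rw [uIcc_of_le hax]; exact Icc_subset_Icc le_rfl hxb)).intervalIntegrable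
  have hint2 : IntervalIntegrable f volume x b :=
    (hcont.mono (by rw [uIcc_of_le hxb]; exact Icc_subset_Icc hax le_rfl)).intervalIntegrable
  have hsplit : (∫ t in a..b, f t) = (∫ t in a..x, f t) + ∫ t in x..b, f t :=
    (integral_add_adjacent_intervals hint1 hint2).symm
  have e1 : (∫ t in a..x, (f t - f a)) = (∫ t in a..x, f t) - (x - a) * f a := by
    rw [intervalIntegral.integral_sub hint1 intervalIntegrable_const,
      intervalIntegral.integral_const, smul_eq_mul]
  have e2 : (∫ t in x..b, (f t - f b)) = (∫ t in x..b, f t) - (b - x) * f b := by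
    rw [intervalIntegral.integral_sub hint2 intervalIntegrable_const,
      intervalIntegral.integral_const, smul_eq_mul]
  have b1 : |∫ t in a..x, (f t - f a)| ≤ L * (x - a) ^ 2 / 2 := by
    calc |∫ t in a..x, (f t - f a)| ≤ ∫ t in a..x, |f t - f a| := by
          simpa using intervalIntegral.norm_integral_le_integral_norm (f := fun t => f t - f a) hax
      _ ≤ ∫ t in a..x, L * (t - a) := by
          apply intervalIntegral.integral_mono_on hax
            ((hint1.sub intervalIntegrable_const).abs)
            ((continuous_const.mul (continuous_id.sub continuous_const)).intervalIntegrable _ _)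
          intro t ht
          have h := hf t ⟨ht.1, ht.2.trans hxb⟩ a ⟨le_rfl, hab.le⟩
          rwa [abs_of_nonneg (sub_nonneg.2 ht.1)] at h
      _ = L * (x - a) ^ 2 / 2 := by
          rw [intervalIntegral.integral_const_mul,
            intervalIntegral.integral_sub intervalIntegrable_id intervalIntegrable_const,
            integral_id, intervalIntegral.integral_const, smul_eq_mul]
          ring
  have b2 : |∫ t in x..b, (f t - f b)| ≤ L * (b - x) ^ 2 / 2 := by
    calc |∫ t in x..b, (f t - f b)| ≤ ∫ t in x..b, |f t - f b| := by
          simpa using intervalIntegral.norm_integral_le_integral_norm (f := fun t => f t - f b) hxb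
      _ ≤ ∫ t in x..b, L * (b - t) := by
          apply intervalIntegral.integral_mono_on hxb
            ((hint2.sub intervalIntegrable_const).abs)
            ((continuous_const.mul (continuous_const.sub continuous_id)).intervalIntegrable _ _)
          intro t ht
          have h := hf t ⟨hax.trans ht.1, ht.2⟩ b ⟨hab.le, le_rfl⟩
          rwa [abs_sub_comm t b, abs_of_nonneg (sub_nonneg.2 ht.2)] at h
      _ = L * (b - x) ^ 2 / 2 := by
          rw [intervalIntegral.integral_const_mul,
            intervalIntegral.integral_sub intervalIntegrable_const intervalIntegrable_id,
            integral_id, intervalIntegral.integral_const, smul_eq_mul]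
          ring
  have key : (∫ t in a..b, f t) - ((x - a) * f a + (b - x) * f b)
      = (∫ t in a..x, (f t - f a)) + ∫ t in x..b, (f t - f b) := by
    rw [e1, e2, hsplit]; ring
  rw [key]
  calc |(∫ t in a..x, (f t - f a)) + ∫ t in x..b, (f t - f b)|
      ≤ |∫ t in a..x, (f t - f a)| + |∫ t in x..b, (f t - f b)| := abs_add_le _ _
    _ ≤ L * (x - a) ^ 2 / 2 + L * (b - x) ^ 2 / 2 := add_le_add b1 b2
    _ = ((1 / 4) * (b - a) ^ 2 + (x - (a + b) / 2) ^ 2) * L := by ring
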